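/- Let 𝓕 be a non-principal ultrafilter on ℕ and let 𝔪_𝓕 = {f ∈ ℓ^∞ : lim_𝓕 f(n) = 0}. Then 𝔪_𝓕 is a maximal ideal of ℓ^∞, and every h ∈ ℓ² can be written h = g·k with g ∈ 𝔪_𝓕 and k ∈ ℓ²; in particular 𝔪_𝓕 ℓ² = ℓ². -/

import Mathlib

open Filter Topology
open scoped ENNReal

set_option synthInstance.maxHeartbeats 1000000
set_option maxHeartbeats 1000000

noncomputable section

/-- `ℓ^∞`: the Banach algebra of bounded complex sequences, realised as a subalgebra of the
algebra of all complex sequences, with pointwise (termwise) operations. -/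
def linf : Subalgebra ℂ (ℕ → ℂ) where
  carrier := {f | Memℓp f ∞}
  mul_mem' {f g} hf hg := show Memℓp (f * g) ∞ from Memℓp.infty_mul hf hg
  one_mem' := show Memℓp (1 : ℕ → ℂ) ∞ from one_memℓp_infty
  add_mem' {f g} hf hg := show Memℓp (f + g) ∞ from Memℓp.add hf hg
  zero_mem' := show Memℓp (0 : ℕ → ℂ) ∞ from zero_memℓp
  algebraMap_mem' c := show Memℓp (algebraMap ℂ (ℕ → ℂ) c) ∞ from algebraMap_memℓp_infty c

lemma memℓp_two_infty_mul {f g : ℕ → ℂ} (hf : Memℓp f ∞) (hg : Memℓp g 2) :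
    Memℓp (f * g) 2 := by
  obtain ⟨C, hC⟩ := memℓp_infty_iff.1 hf
  have hC' : ∀ i, ‖f i‖ ≤ C := fun i => hC ⟨i, rfl⟩
  have hC0 : 0 ≤ C := (norm_nonneg (f 0)).trans (hC' 0)
  apply memℓp_gen
  have hgs : Summable fun i => ‖g i‖ ^ (2 : ℝ≥0∞).toReal := hg.summable (by norm_num)
  refine (hgs.mul_left (C ^ (2 : ℝ≥0∞).toReal)).of_nonneg_of_le
      (fun i => Real.rpow_nonneg (norm_nonneg _) _) (fun i => ?_)
  calc ‖(f * g) i‖ ^ (2 : ℝ≥0∞).toReal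
      ≤ (C * ‖g i‖) ^ (2 : ℝ≥0∞).toReal := by
        refine Real.rpow_le_rpow (norm_nonneg _) ?_ ENNReal.toReal_nonneg
        rw [Pi.mul_apply, norm_mul]
        exact mul_le_mul_of_nonneg_right (hC' i) (norm_nonneg _)
    _ = C ^ (2 : ℝ≥0∞).toReal * ‖g i‖ ^ (2 : ℝ≥0∞).toReal :=
        Real.mul_rpow hC0 (norm_nonneg _)

/-- `ℓ²`: the Hilbert space of square-summable complex sequences, as a module over `ℓ^∞`,
the action being termwise multiplication. -/
def l2 : Submodule linf (ℕ → ℂ) where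
  carrier := {f | Memℓp f 2}
  add_mem' {f g} hf hg := show Memℓp (f + g) 2 from Memℓp.add hf hg
  zero_mem' := show Memℓp (0 : ℕ → ℂ) 2 from zero_memℓp
  smul_mem' c f hf := by
    have hsmul : c • f = (c : ℕ → ℂ) * f := Algebra.smul_def c f
    rw [Set.mem_setOf_eq, hsmul]
    exact memℓp_two_infty_mul c.2 hf

instance : CommRing linf := inferInstance
instance : Module linf (ℕ → ℂ) := inferInstance
instance : AddCommGroup l2 := inferInstance
instance : Module linf l2 := inferInstance

lemma single_mem_l2 (n : ℕ) : Pi.single n (1 : ℂ) ∈ l2 := by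
  refine (memℓp_zero ?_).of_exponent_ge zero_le
  refine (Set.finite_singleton n).subset ?_
  intro j hj
  simp only [Set.mem_setOf_eq] at hj
  simp only [Set.mem_singleton_iff]
  by_contra h
  exact hj (Pi.single_eq_of_ne h 1)

/-!
Write `r n = ∑_{k ≥ n} |h k|²` for the tails of `h ∈ ℓ²` and `s n = √(r n)`. Since
`|h n|² = s n² - s (n+1)² ≤ 2 s n (s n - s (n+1))`, the series `∑ |h n|² / s n` is dominated by a
telescoping one, so `h = g k` with `g n = √(s n) → 0` and `k = h / g ∈ ℓ²`. A non-principal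
ultrafilter on `ℕ` is finer than `atTop`, so `g` lies in `𝔪_𝓕`. The ideal `𝔪_𝓕` itself is the
kernel of the character `f ↦ lim_𝓕 f`, which exists because bounded sequences take values in a
compact set, so `𝔪_𝓕` is maximal.
-/

theorem memℓp_two_iff_summable_sq {α E : Type*} [NormedAddCommGroup E] {f : α → E} :
    Memℓp f 2 ↔ Summable fun i => ‖f i‖ ^ 2 := by
  rw [memℓp_gen_iff (by norm_num)]
  norm_num [Real.rpow_two]

theorem tsum_nat_add_eq_add_tsum_succ {G : Type*} [AddCommGroup G] [TopologicalSpace G]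
    [IsTopologicalAddGroup G] [T2Space G] {a : ℕ → G} (ha : Summable a) (n : ℕ) :
    ∑' k, a (k + n) = a n + ∑' k, a (k + (n + 1)) := by
  rw [((summable_nat_add_iff n).2 ha).tsum_eq_zero_add, zero_add]
  simp only [add_assoc, add_comm 1 n]

theorem sq_sub_sq_div_le_two_mul_sub {s t : ℝ} (ht : 0 ≤ t) (hts : t ≤ s) :
    (s ^ 2 - t ^ 2) / s ≤ 2 * (s - t) := by
  rcases (ht.trans hts).eq_or_lt with hs | hs
  · simp [← hs, le_antisymm (hs ▸ hts) ht]
  · rw [div_le_iff₀ hs]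
    nlinarith

theorem Antitone.summable_sub_succ {s : ℕ → ℝ} (hs : Antitone s) (hs0 : ∀ n, 0 ≤ s n) :
    Summable fun n => s n - s (n + 1) :=
  summable_of_sum_range_le (c := s 0) (fun n => sub_nonneg.2 (hs n.le_succ)) fun n => by
    rw [Finset.sum_range_sub']
    linarith [hs0 n]

theorem summable_div_sqrt_tsum_nat_add {a : ℕ → ℝ} (ha0 : ∀ n, 0 ≤ a n) (ha : Summable a) :
    Summable fun n => a n / √(∑' k, a (k + n)) := by
  set s : ℕ → ℝ := fun n => √(∑' k, a (k + n)) with hs_def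
  have hs : Antitone s := antitone_nat_of_succ_le fun n =>
    Real.sqrt_le_sqrt (by rw [tsum_nat_add_eq_add_tsum_succ ha n]; linarith [ha0 n])
  have ha_eq (n : ℕ) : a n = s n ^ 2 - s (n + 1) ^ 2 := by
    simp only [hs_def, Real.sq_sqrt (tsum_nonneg fun k => ha0 _)]
    rw [tsum_nat_add_eq_add_tsum_succ ha n]
    ring
  refine ((hs.summable_sub_succ fun n => Real.sqrt_nonneg _).mul_left 2).of_nonneg_of_le
    (fun n => div_nonneg (ha0 n) (Real.sqrt_nonneg _)) fun n => ?_
  rw [ha_eq n]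
  exact sq_sub_sq_div_le_two_mul_sub (Real.sqrt_nonneg _) (hs n.le_succ)

theorem Memℓp.exists_tendsto_zero_eq_mul {𝕜 : Type*} [RCLike 𝕜] {h : ℕ → 𝕜} (hh : Memℓp h 2) :
    ∃ g k : ℕ → 𝕜, Tendsto g atTop (𝓝 0) ∧ Memℓp k 2 ∧ h = g * k := by
  set a : ℕ → ℝ := fun n => ‖h n‖ ^ 2 with ha_def
  have ha : Summable a := memℓp_two_iff_summable_sq.1 hh
  set b : ℕ → ℝ := fun n => √√(∑' k, a (k + n))
  have hb_sq (n : ℕ) : b n ^ 2 = √(∑' k, a (k + n)) := Real.sq_sqrt (Real.sqrt_nonneg _)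
  refine ⟨fun n => (b n : 𝕜), fun n => h n / b n, ?_, ?_, ?_⟩
  · have hb : Tendsto b atTop (𝓝 0) :=
      ((Real.continuous_sqrt.comp Real.continuous_sqrt).tendsto' 0 0 (by simp)).comp
        (tendsto_sum_nat_add a)
    exact (RCLike.continuous_ofReal.tendsto' 0 0 (by simp)).comp hb
  · refine memℓp_two_iff_summable_sq.2 ((summable_div_sqrt_tsum_nat_add
      (fun n => sq_nonneg _) ha).congr fun n => ?_)
    rw [norm_div, div_pow, RCLike.norm_ofReal, sq_abs, hb_sq]
  · funext n
    -- where `b n = 0` the whole tail vanishes, so the junk value `h n / 0 = 0` is harmless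
    by_cases hbn : b n = 0
    · have ha_le : a n ≤ (b n ^ 2) ^ 2 := by
        rw [hb_sq, Real.sq_sqrt (tsum_nonneg fun k => sq_nonneg _)]
        simpa using ((summable_nat_add_iff n).2 ha).le_tsum 0 fun k _ => sq_nonneg _
      have : h n = 0 := by simpa [ha_def, hbn] using ha_le
      simp [this]
    · exact (mul_div_cancel₀ (h n) (RCLike.ofReal_ne_zero.2 hbn)).symm

theorem exists_tendsto_zero_eq_smul_l2 (h : l2) :
    ∃ (g : linf) (k : l2), Tendsto (g : ℕ → ℂ) atTop (𝓝 0) ∧ h = g • k := by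
  obtain ⟨g, k, hg, hk, hgk⟩ := Memℓp.exists_tendsto_zero_eq_mul h.2
  exact ⟨⟨g, memℓp_infty hg.norm.bddAbove_range⟩, ⟨k, hk⟩, hg, Subtype.ext hgk⟩

theorem Ultrafilter.le_atTop_of_ne_pure (𝓕 : Ultrafilter ℕ)
    (h𝓕 : ∀ m : ℕ, (𝓕 : Filter ℕ) ≠ pure m) : (𝓕 : Filter ℕ) ≤ atTop := by
  rcases 𝓕.le_cofinite_or_eq_pure with hle | ⟨m, rfl⟩
  · rwa [Nat.cofinite_eq_atTop] at hle
  · exact absurd rfl (h𝓕 m)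

theorem Memℓp.tendsto_limUnder_ultrafilter {α E : Type*} [NormedAddCommGroup E] [ProperSpace E]
    (𝓕 : Ultrafilter α) {f : α → E} (hf : Memℓp f ∞) :
    Tendsto f 𝓕 (𝓝 (limUnder (𝓕 : Filter α) f)) := by
  obtain ⟨C, hC⟩ := memℓp_infty_iff.1 hf
  have hf_ball : ∀ i, f i ∈ Metric.closedBall 0 C := fun i => by
    simpa using hC ⟨i, rfl⟩
  obtain ⟨x, -, hx⟩ := (isCompact_closedBall (0 : E) C).ultrafilter_le_nhds (𝓕.map f)
    (tendsto_principal.2 (Eventually.of_forall hf_ball))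
  exact tendsto_nhds_limUnder ⟨x, hx⟩

def ultrafilterLim (𝓕 : Ultrafilter ℕ) : linf →+* ℂ where
  toFun f := limUnder (𝓕 : Filter ℕ) f
  map_one' := tendsto_const_nhds.limUnder_eq
  map_mul' f g := ((Memℓp.tendsto_limUnder_ultrafilter 𝓕 f.2).mul
    (Memℓp.tendsto_limUnder_ultrafilter 𝓕 g.2)).limUnder_eq
  map_zero' := tendsto_const_nhds.limUnder_eq
  map_add' f g := ((Memℓp.tendsto_limUnder_ultrafilter 𝓕 f.2).add
    (Memℓp.tendsto_limUnder_ultrafilter 𝓕 g.2)).limUnder_eq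

theorem mem_ker_ultrafilterLim_iff (𝓕 : Ultrafilter ℕ) (f : linf) :
    f ∈ RingHom.ker (ultrafilterLim 𝓕) ↔ Tendsto (fun n => (f : ℕ → ℂ) n) ↑𝓕 (𝓝 0) :=
  ⟨fun hf => hf ▸ Memℓp.tendsto_limUnder_ultrafilter 𝓕 f.2, Tendsto.limUnder_eq⟩

theorem ultrafilterLim_surjective (𝓕 : Ultrafilter ℕ) : Function.Surjective (ultrafilterLim 𝓕) :=
  fun c => ⟨algebraMap ℂ linf c, tendsto_const_nhds.limUnder_eq⟩

/-- Let `𝓕` be a non-principal ultrafilter on `ℕ` and let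
`𝔪_𝓕 = {f ∈ ℓ^∞ : lim_𝓕 f(n) = 0}`. Then `𝔪_𝓕` is a maximal ideal of `ℓ^∞`, every
`h ∈ ℓ²` can be written `h = g·k` with `g ∈ 𝔪_𝓕` and `k ∈ ℓ²`, and in particular
`𝔪_𝓕 ℓ² = ℓ²`. -/
theorem ultrafilter_maximal_ideal_smul_l2_eq_top
    (𝓕 : Ultrafilter ℕ) (h𝓕 : ∀ m : ℕ, (𝓕 : Filter ℕ) ≠ pure m) :
    ∃ 𝔪 : Ideal linf,
      (∀ f : linf, f ∈ 𝔪 ↔ Tendsto (fun n => (f : ℕ → ℂ) n) ↑𝓕 (𝓝 0)) ∧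
      𝔪.IsMaximal ∧
      (∀ h : l2, ∃ (g : linf) (k : l2), g ∈ 𝔪 ∧ h = g • k) ∧
      𝔪 • (⊤ : Submodule linf l2) = ⊤ := by
  have hfactor (h : l2) :
      ∃ (g : linf) (k : l2), g ∈ RingHom.ker (ultrafilterLim 𝓕) ∧ h = g • k := by
    obtain ⟨g, k, hg, rfl⟩ := exists_tendsto_zero_eq_smul_l2 h
    exact ⟨g, k, (mem_ker_ultrafilterLim_iff 𝓕 g).2
      (hg.mono_left (𝓕.le_atTop_of_ne_pure h𝓕)), rfl⟩
  refine ⟨_, mem_ker_ultrafilterLim_iff 𝓕,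
    RingHom.ker_isMaximal_of_surjective _ (ultrafilterLim_surjective 𝓕), hfactor, ?_⟩
  refine eq_top_iff.2 fun h _ => ?_
  obtain ⟨g, k, hg, rfl⟩ := hfactor h
  exact Submodule.smul_mem_smul hg Submodule.mem_top
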